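/- arXiv:1404.3592 — 5 statements merged into one kernel-verified Lean document; each statement's English description precedes it below -/
import Mathlib

section
/- Along any differentiable path of unit-norm perturbations the modulus of the eigenvector product is differentiable and satisfies d/dt |y(t)^H x(t)| = ε |y(t)^H x(t)| · Re⟨Ė(t), S(t)⟩, where S(t) = y(t) y(t)^H G(t)^H + G(t)^H x(t) x(t)^H. -/
/-!
Differentiating `u = yᴴ x` and inserting the eigenvector derivative formulas, the terms through
`G Ṁ x` and `yᴴ Ṁ G` are killed by `G x = 0` and `yᴴ G = 0`, leaving
`u̇ = (xᴴ G Ṁ x + yᴴ Ṁ G y) u`. The scalar factor is the conjugate of `⟨Ṁ, S⟩` (a trace identity),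
and for a nonvanishing scalar path with `u̇ = c u` one has `d/dt |u| = (Re c) |u|`.
-/

open Matrix

/-- Frobenius inner product `⟨A,B⟩ = trace(Aᴴ B)`. -/
noncomputable def frobInner {n : ℕ} (A B : Matrix (Fin n) (Fin n) ℂ) : ℂ :=
  (Aᴴ * B).trace

/-- `G` is a group inverse of `M`. -/
def IsGroupInverse {n : ℕ} (M G : Matrix (Fin n) (Fin n) ℂ) : Prop :=
  M * G = G * M ∧ G * M * G = G ∧ M * G * M = M

/-- The matrix `S = y yᴴ Gᴴ + Gᴴ x xᴴ`. -/
noncomputable def Smat {n : ℕ} (x y : Fin n → ℂ) (G : Matrix (Fin n) (Fin n) ℂ) :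
    Matrix (Fin n) (Fin n) ℂ :=
  vecMulVec y (star y) * Gᴴ + Gᴴ * vecMulVec x (star x)

theorem HasDerivAt.star_dotProduct {ι 𝕜 : Type*} [Fintype ι] [RCLike 𝕜]
    {u v : ℝ → ι → 𝕜} {u' v' : ι → 𝕜} {t : ℝ}
    (hu : ∀ i, HasDerivAt (fun s => u s i) (u' i) t)
    (hv : ∀ i, HasDerivAt (fun s => v s i) (v' i) t) :
    HasDerivAt (fun s => star (u s) ⬝ᵥ v s) (star u' ⬝ᵥ v t + star (u t) ⬝ᵥ v') t := by
  simpa only [dotProduct, Pi.star_apply, ← Finset.sum_add_distrib] using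
    HasDerivAt.fun_sum fun i _ => (hu i).star.fun_mul (hv i)

theorem HasDerivAt.norm_of_eq_mul_self {𝕜 : Type*} [RCLike 𝕜] {u : ℝ → 𝕜} {c : 𝕜} {t : ℝ}
    (hu : HasDerivAt u (c * u t) t) (h0 : u t ≠ 0) :
    HasDerivAt (fun s => ‖u s‖) (RCLike.re c * ‖u t‖) t := by
  have hsq : HasDerivAt (fun s => ‖u s‖ ^ 2) (2 * (RCLike.re c * ‖u t‖ ^ 2)) t := by
    convert hu.norm_sq using 2
    rw [real_inner_eq_re_inner, RCLike.inner_apply, mul_comm, mul_assoc, RCLike.mul_conj,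
      ← RCLike.ofReal_pow, RCLike.re_mul_ofReal, mul_comm]
  have hsqrt := hsq.sqrt (by positivity)
  simp only [Real.sqrt_sq (norm_nonneg _)] at hsqrt
  convert hsqrt using 1
  field_simp

theorem Matrix.trace_vecMulVec_mul {ι R : Type*} [Fintype ι] [CommSemiring R]
    (u v : ι → R) (M : Matrix ι ι R) :
    (vecMulVec u v * M).trace = v ⬝ᵥ (M *ᵥ u) := by
  rw [vecMulVec_mul, trace_vecMulVec, dotProduct_comm, dotProduct_mulVec]

theorem frobInner_smul_left {n : ℕ} (c : ℂ) (A B : Matrix (Fin n) (Fin n) ℂ) :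
    frobInner (c • A) B = star c * frobInner A B := by
  rw [frobInner, frobInner, conjTranspose_smul, smul_mul, trace_smul, smul_eq_mul]

theorem star_frobInner_Smat {n : ℕ} (x y : Fin n → ℂ) (G M : Matrix (Fin n) (Fin n) ℂ) :
    star (frobInner M (Smat x y G)) = star x ⬝ᵥ (G *ᵥ (M *ᵥ x)) + star y ⬝ᵥ ((M * G) *ᵥ y) := by
  have hS : (Smat x y G)ᴴ = G * vecMulVec y (star y) + vecMulVec x (star x) * G := by
    simp only [Smat, conjTranspose_add, conjTranspose_mul, conjTranspose_conjTranspose,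
      conjTranspose_vecMulVec, star_star]
  rw [frobInner, ← trace_conjTranspose, conjTranspose_mul, conjTranspose_conjTranspose, hS,
    add_mul, trace_add, Matrix.mul_assoc G, trace_mul_comm G, Matrix.mul_assoc,
    Matrix.mul_assoc, trace_vecMulVec_mul, trace_vecMulVec_mul, mulVec_mulVec, add_comm]

theorem star_dotProduct_deriv_eq {n : ℕ} {x x' y y' : Fin n → ℂ}
    {G M : Matrix (Fin n) (Fin n) ℂ} (hGx : G *ᵥ x = 0) (hyG : star y ᵥ* G = 0)
    (hx' : x' = (star x ⬝ᵥ (G *ᵥ (M *ᵥ x))) • x - G *ᵥ (M *ᵥ x))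
    (hy' : star y' = (star y ⬝ᵥ ((M * G) *ᵥ y)) • star y - star y ᵥ* (M * G)) :
    star y' ⬝ᵥ x + star y ⬝ᵥ x' = star (frobInner M (Smat x y G)) * (star y ⬝ᵥ x) := by
  have hyMGx : (star y ᵥ* (M * G)) ⬝ᵥ x = 0 := by
    rw [← dotProduct_mulVec, ← mulVec_mulVec, hGx, mulVec_zero, dotProduct_zero]
  have hyGMx : star y ⬝ᵥ (G *ᵥ (M *ᵥ x)) = 0 := by
    rw [dotProduct_mulVec, hyG, zero_dotProduct]
  rw [star_frobInner_Smat, hy', hx', sub_dotProduct, smul_dotProduct, dotProduct_sub,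
    dotProduct_smul, hyMGx, hyGMx, smul_eq_mul, smul_eq_mul]
  ring

theorem stmt0_general {n : ℕ} (ε : ℝ)
    (E' : ℝ → Matrix (Fin n) (Fin n) ℂ)
    (x x' y y' : ℝ → (Fin n → ℂ))
    (G : ℝ → Matrix (Fin n) (Fin n) ℂ)
    (hxdiff : ∀ t i, HasDerivAt (fun s => x s i) (x' t i) t)
    (hydiff : ∀ t i, HasDerivAt (fun s => y s i) (y' t i) t)
    (hyx : ∀ t, star (y t) ⬝ᵥ x t ≠ 0)
    (hGx : ∀ t, G t *ᵥ x t = 0)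
    (hyG : ∀ t, star (y t) ᵥ* G t = 0)
    (hx' : ∀ t, x' t =
      (star (x t) ⬝ᵥ (G t *ᵥ (((ε : ℂ) • E' t) *ᵥ x t))) • x t
        - G t *ᵥ (((ε : ℂ) • E' t) *ᵥ x t))
    (hy' : ∀ t, star (y' t) =
      (star (y t) ⬝ᵥ ((((ε : ℂ) • E' t) * G t) *ᵥ y t)) • star (y t)
        - star (y t) ᵥ* (((ε : ℂ) • E' t) * G t)) :
    ∀ t, HasDerivAt (fun s => ‖star (y s) ⬝ᵥ x s‖)
      (ε * ‖star (y t) ⬝ᵥ x t‖ *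
        (frobInner (E' t) (Smat (x t) (y t) (G t))).re) t := by
  intro t
  have hu := HasDerivAt.star_dotProduct (hydiff t) (hxdiff t)
  rw [star_dotProduct_deriv_eq (hGx t) (hyG t) (hx' t) (hy' t)] at hu
  convert hu.norm_of_eq_mul_self (hyx t) using 1
  rw [frobInner_smul_left, RCLike.star_def, RCLike.conj_re, Complex.conj_ofReal,
    RCLike.re_eq_complex_re, Complex.re_ofReal_mul]
  ring

theorem stmt0 {n : ℕ} (hn : 2 ≤ n) (A : Matrix (Fin n) (Fin n) ℂ) (ε : ℝ) (hε : 0 < ε)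
    (E E' : ℝ → Matrix (Fin n) (Fin n) ℂ)
    (x x' y y' : ℝ → (Fin n → ℂ))
    (lam lam' : ℝ → ℂ)
    (G G' : ℝ → Matrix (Fin n) (Fin n) ℂ)
    (hEdiff : ∀ t i j, HasDerivAt (fun s => E s i j) (E' t i j) t)
    (hxdiff : ∀ t i, HasDerivAt (fun s => x s i) (x' t i) t)
    (hydiff : ∀ t i, HasDerivAt (fun s => y s i) (y' t i) t)
    (hlamdiff : ∀ t, HasDerivAt lam (lam' t) t)
    (hGdiff : ∀ t i j, HasDerivAt (fun s => G s i j) (G' t i j) t)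
    (heig : ∀ t, (A + (ε : ℂ) • E t) *ᵥ x t = lam t • x t)
    (hleig : ∀ t, star (y t) ᵥ* (A + (ε : ℂ) • E t) = lam t • star (y t))
    (hxnorm : ∀ t, star (x t) ⬝ᵥ x t = 1)
    (hynorm : ∀ t, star (y t) ⬝ᵥ y t = 1)
    (hyx : ∀ t, star (y t) ⬝ᵥ x t ≠ 0)
    (hG : ∀ t, IsGroupInverse (A + (ε : ℂ) • E t - lam t • 1) (G t))
    (hGx : ∀ t, G t *ᵥ x t = 0)
    (hyG : ∀ t, star (y t) ᵥ* G t = 0)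
    (hx' : ∀ t, x' t =
      (star (x t) ⬝ᵥ (G t *ᵥ (((ε : ℂ) • E' t) *ᵥ x t))) • x t
        - G t *ᵥ (((ε : ℂ) • E' t) *ᵥ x t))
    (hy' : ∀ t, star (y' t) =
      (star (y t) ⬝ᵥ ((((ε : ℂ) • E' t) * G t) *ᵥ y t)) • star (y t)
        - star (y t) ᵥ* (((ε : ℂ) • E' t) * G t)) :
    ∀ t, HasDerivAt (fun s => ‖star (y s) ⬝ᵥ x s‖)
      (ε * ‖star (y t) ⬝ᵥ x t‖ *
        (frobInner (E' t) (Smat (x t) (y t) (G t))).re) t :=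
  stmt0_general ε E' x x' y y' G hxdiff hydiff hyx hGx hyG hx' hy'
end

section
/- Suppose in addition that ‖E(t)‖_F = 1 for all t and that E solves the differential equation Ė = −S + Re⟨E,S⟩E, where S(t) = y(t) y(t)^H G(t)^H + G(t)^H x(t) x(t)^H. Then d/dt |y(t)^H x(t)| = −ε |y(t)^H x(t)| · ‖S(t) − Re⟨E(t),S(t)⟩E(t)‖_F². In particular d/dt |y^H x| = 0 at time t if and only if Ė(t) = 0. -/
open Matrix

/-- Frobenius norm `‖A‖_F = √⟨A,A⟩`. -/
noncomputable def frobNorm {n : ℕ} (A : Matrix (Fin n) (Fin n) ℂ) : ℝ :=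
  Real.sqrt (frobInner A A).re

/-!
Along the eigenvector derivative formulas, `Gx = 0` and `yᴴG = 0` reduce `d/dt (yᴴx)` to
`⟨S, εĖ⟩ yᴴx`, so `d/dt |yᴴx| = Re⟨S, εĖ⟩ |yᴴx|`. Since `‖E‖_F = 1`, the matrix
`T = S - Re⟨E,S⟩ E` is the orthogonal projection of `S` onto the tangent space `{Re⟨E,·⟩ = 0}` of
the unit sphere at `E`, hence `Re⟨S, T⟩ = ‖T‖_F²`; the ODE says `Ė = -T`.
-/

section

open scoped ComplexOrder

variable {n : ℕ}

lemma frobInner_self_nonneg (A : Matrix (Fin n) (Fin n) ℂ) : 0 ≤ frobInner A A :=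
  (posSemidef_conjTranspose_mul_self A).trace_nonneg

lemma re_frobInner_self_nonneg (A : Matrix (Fin n) (Fin n) ℂ) : 0 ≤ (frobInner A A).re :=
  (RCLike.nonneg_iff.mp (frobInner_self_nonneg A)).1

lemma re_frobInner_self_eq_zero {A : Matrix (Fin n) (Fin n) ℂ} :
    (frobInner A A).re = 0 ↔ A = 0 := by
  have him : (frobInner A A).im = 0 := (RCLike.nonneg_iff.mp (frobInner_self_nonneg A)).2
  rw [← trace_conjTranspose_mul_self_eq_zero_iff, ← frobInner, Complex.ext_iff]
  simp [him]

lemma sq_frobNorm (A : Matrix (Fin n) (Fin n) ℂ) : frobNorm A ^ 2 = (frobInner A A).re :=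
  Real.sq_sqrt (re_frobInner_self_nonneg A)

lemma frobNorm_eq_zero {A : Matrix (Fin n) (Fin n) ℂ} : frobNorm A = 0 ↔ A = 0 := by
  rw [frobNorm, Real.sqrt_eq_zero (re_frobInner_self_nonneg A), re_frobInner_self_eq_zero]

lemma frobInner_add_left (A B C : Matrix (Fin n) (Fin n) ℂ) :
    frobInner (A + B) C = frobInner A C + frobInner B C := by
  rw [frobInner, frobInner, frobInner, conjTranspose_add, add_mul, trace_add]

lemma frobInner_sub_right (A B C : Matrix (Fin n) (Fin n) ℂ) :
    frobInner A (B - C) = frobInner A B - frobInner A C := by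
  rw [frobInner, frobInner, frobInner, mul_sub, trace_sub]

lemma frobInner_smul_right (z : ℂ) (A B : Matrix (Fin n) (Fin n) ℂ) :
    frobInner A (z • B) = z * frobInner A B := by
  rw [frobInner, frobInner, Matrix.mul_smul, trace_smul, smul_eq_mul]

lemma frobInner_real_smul_right (r : ℝ) (A B : Matrix (Fin n) (Fin n) ℂ) :
    frobInner A (r • B) = r * frobInner A B := by
  rw [← frobInner_smul_right, Complex.coe_smul]

lemma frobInner_real_smul_left (r : ℝ) (A B : Matrix (Fin n) (Fin n) ℂ) :
    frobInner (r • A) B = r * frobInner A B := by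
  rw [frobInner, frobInner, conjTranspose_smul, star_trivial, smul_mul, trace_smul,
    Complex.real_smul]

lemma re_frobInner_sub_proj_eq_zero {E : Matrix (Fin n) (Fin n) ℂ}
    (hE : (frobInner E E).re = 1) (S : Matrix (Fin n) (Fin n) ℂ) :
    (frobInner E (S - (frobInner E S).re • E)).re = 0 := by
  rw [frobInner_sub_right, frobInner_real_smul_right, Complex.sub_re, Complex.re_ofReal_mul, hE,
    mul_one, sub_self]

lemma re_frobInner_sub_proj_eq_sq_frobNorm {E : Matrix (Fin n) (Fin n) ℂ}
    (hE : (frobInner E E).re = 1) (S : Matrix (Fin n) (Fin n) ℂ) :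
    (frobInner S (S - (frobInner E S).re • E)).re
      = frobNorm (S - (frobInner E S).re • E) ^ 2 := by
  set T := S - (frobInner E S).re • E
  have hS : S = T + (frobInner E S).re • E := (sub_add_cancel _ _).symm
  conv_lhs => rw [hS]
  rw [sq_frobNorm, frobInner_add_left, frobInner_real_smul_left, Complex.add_re,
    Complex.re_ofReal_mul, re_frobInner_sub_proj_eq_zero hE, mul_zero, add_zero]

lemma trace_vecMulVec_mul (a b : Fin n → ℂ) (N : Matrix (Fin n) (Fin n) ℂ) :
    (vecMulVec a b * N).trace = b ⬝ᵥ (N *ᵥ a) := by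
  simp only [trace, diag_apply, mul_apply, vecMulVec_apply, dotProduct, mulVec, Finset.mul_sum]
  rw [Finset.sum_comm]
  exact Finset.sum_congr rfl fun j _ => Finset.sum_congr rfl fun i _ => by ring

lemma frobInner_Smat (x y : Fin n → ℂ) (G M : Matrix (Fin n) (Fin n) ℂ) :
    frobInner (Smat x y G) M = star y ⬝ᵥ ((M * G) *ᵥ y) + star x ⬝ᵥ ((G * M) *ᵥ x) := by
  rw [frobInner, Smat, conjTranspose_add, conjTranspose_mul, conjTranspose_mul,
    conjTranspose_conjTranspose, conjTranspose_vecMulVec, conjTranspose_vecMulVec,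
    star_star, star_star, add_mul, trace_add, mul_assoc, trace_mul_comm G, mul_assoc,
    trace_vecMulVec_mul, mul_assoc, trace_vecMulVec_mul]

lemma star_dotProduct_deriv_eq_frobInner_Smat_mul {x y x' y' : Fin n → ℂ}
    {G M : Matrix (Fin n) (Fin n) ℂ} (hGx : G *ᵥ x = 0) (hyG : star y ᵥ* G = 0)
    (hx' : x' = (star x ⬝ᵥ (G *ᵥ (M *ᵥ x))) • x - G *ᵥ (M *ᵥ x))
    (hy' : star y' = (star y ⬝ᵥ ((M * G) *ᵥ y)) • star y - star y ᵥ* (M * G)) :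
    star y' ⬝ᵥ x + star y ⬝ᵥ x' = frobInner (Smat x y G) M * (star y ⬝ᵥ x) := by
  have hyx' : star y ⬝ᵥ x' = (star x ⬝ᵥ (G *ᵥ (M *ᵥ x))) * (star y ⬝ᵥ x) := by
    rw [hx', dotProduct_sub, dotProduct_smul, smul_eq_mul, dotProduct_mulVec (star y) G, hyG,
      zero_dotProduct, sub_zero]
  have hy'x : star y' ⬝ᵥ x = (star y ⬝ᵥ ((M * G) *ᵥ y)) * (star y ⬝ᵥ x) := by
    rw [hy', sub_dotProduct, smul_dotProduct, smul_eq_mul, ← dotProduct_mulVec,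
      ← mulVec_mulVec x M G, hGx, mulVec_zero, dotProduct_zero, sub_zero]
  rw [hy'x, hyx', frobInner_Smat, mulVec_mulVec, add_mul]

end

open scoped RealInnerProductSpace in
lemma HasDerivAt.norm {F : Type*} [NormedAddCommGroup F] [InnerProductSpace ℝ F]
    {f : ℝ → F} {f' : F} {t : ℝ} (hf : HasDerivAt f f' t) (h0 : f t ≠ 0) :
    HasDerivAt (fun s => ‖f s‖) (⟪f t, f'⟫ / ‖f t‖) t := by
  have h := hf.norm_sq.sqrt (pow_ne_zero 2 (norm_ne_zero_iff.mpr h0))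
  simp only [Real.sqrt_sq (norm_nonneg _)] at h
  convert h using 1
  field_simp

lemma HasDerivAt.norm_of_mul_self {f : ℝ → ℂ} {c : ℂ} {t : ℝ}
    (hf : HasDerivAt f (c * f t) t) (h0 : f t ≠ 0) :
    HasDerivAt (fun s => ‖f s‖) (c.re * ‖f t‖) t := by
  convert hf.norm h0 using 1
  rw [Complex.inner, mul_assoc, Complex.mul_conj, Complex.normSq_eq_norm_sq,
    Complex.re_mul_ofReal]
  field_simp

lemma HasDerivAt.dotProduct {ι 𝔸 : Type*} [Fintype ι] [NormedCommRing 𝔸] [NormedAlgebra ℝ 𝔸]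
    {u v : ℝ → ι → 𝔸} {u' v' : ι → 𝔸} {t : ℝ}
    (hu : ∀ i, HasDerivAt (fun s => u s i) (u' i) t)
    (hv : ∀ i, HasDerivAt (fun s => v s i) (v' i) t) :
    HasDerivAt (fun s => u s ⬝ᵥ v s) (u' ⬝ᵥ v t + u t ⬝ᵥ v') t := by
  show HasDerivAt (fun s => ∑ i, u s i * v s i) (∑ i, u' i * v t i + ∑ i, u t i * v' i) t
  rw [← Finset.sum_add_distrib]
  exact HasDerivAt.fun_sum fun i _ => (hu i).mul (hv i)

theorem stmt2_general {n : ℕ} (ε : ℝ) (hε : 0 < ε)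
    (E E' : ℝ → Matrix (Fin n) (Fin n) ℂ)
    (x x' y y' : ℝ → (Fin n → ℂ))
    (G : ℝ → Matrix (Fin n) (Fin n) ℂ)
    (hxdiff : ∀ t i, HasDerivAt (fun s => x s i) (x' t i) t)
    (hydiff : ∀ t i, HasDerivAt (fun s => y s i) (y' t i) t)
    (hyx : ∀ t, star (y t) ⬝ᵥ x t ≠ 0)
    (hGx : ∀ t, G t *ᵥ x t = 0)
    (hyG : ∀ t, star (y t) ᵥ* G t = 0)
    (hx' : ∀ t, x' t =
      (star (x t) ⬝ᵥ (G t *ᵥ (((ε : ℂ) • E' t) *ᵥ x t))) • x t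
        - G t *ᵥ (((ε : ℂ) • E' t) *ᵥ x t))
    (hy' : ∀ t, star (y' t) =
      (star (y t) ⬝ᵥ ((((ε : ℂ) • E' t) * G t) *ᵥ y t)) • star (y t)
        - star (y t) ᵥ* (((ε : ℂ) • E' t) * G t))
    (hEnorm : ∀ t, frobNorm (E t) = 1)
    (hODE : ∀ t, E' t = -(Smat (x t) (y t) (G t))
        + (frobInner (E t) (Smat (x t) (y t) (G t))).re • E t) :
    ∀ t, HasDerivAt (fun s => ‖star (y s) ⬝ᵥ x s‖)
        (-(ε * ‖star (y t) ⬝ᵥ x t‖) *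
          frobNorm (Smat (x t) (y t) (G t)
            - (frobInner (E t) (Smat (x t) (y t) (G t))).re • E t) ^ 2) t
      ∧ ((-(ε * ‖star (y t) ⬝ᵥ x t‖) *
          frobNorm (Smat (x t) (y t) (G t)
            - (frobInner (E t) (Smat (x t) (y t) (G t))).re • E t) ^ 2 = 0)
          ↔ E' t = 0) := by
  intro t
  set S := Smat (x t) (y t) (G t)
  set T := S - (frobInner (E t) S).re • E t
  have hE'T : E' t = -T := by rw [hODE t, neg_sub, sub_eq_neg_add]
  have hE : (frobInner (E t) (E t)).re = 1 := by rw [← sq_frobNorm, hEnorm t, one_pow]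
  have hrate : (frobInner S ((ε : ℂ) • E' t)).re = -(ε * frobNorm T ^ 2) := by
    rw [hE'T, smul_neg, ← neg_smul, ← Complex.ofReal_neg, frobInner_smul_right,
      Complex.re_ofReal_mul, re_frobInner_sub_proj_eq_sq_frobNorm hE, neg_mul]
  have hderiv : HasDerivAt (fun s => star (y s) ⬝ᵥ x s)
      (frobInner S ((ε : ℂ) • E' t) * (star (y t) ⬝ᵥ x t)) t := by
    rw [← star_dotProduct_deriv_eq_frobInner_Smat_mul (hGx t) (hyG t) (hx' t) (hy' t)]
    exact HasDerivAt.dotProduct (u' := star (y' t)) (fun i => (hydiff t i).star) (hxdiff t)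
  have hεf : ε * ‖star (y t) ⬝ᵥ x t‖ ≠ 0 := mul_ne_zero hε.ne' (norm_ne_zero_iff.mpr (hyx t))
  refine ⟨?_, ?_⟩
  · convert hderiv.norm_of_mul_self (hyx t) using 1
    rw [hrate]
    ring
  · rw [hE'T, neg_eq_zero, ← frobNorm_eq_zero, mul_eq_zero, or_iff_right (neg_ne_zero.mpr hεf),
      pow_eq_zero_iff two_ne_zero]

theorem stmt2 {n : ℕ} (hn : 2 ≤ n) (A : Matrix (Fin n) (Fin n) ℂ) (ε : ℝ) (hε : 0 < ε)
    (E E' : ℝ → Matrix (Fin n) (Fin n) ℂ)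
    (x x' y y' : ℝ → (Fin n → ℂ))
    (lam lam' : ℝ → ℂ)
    (G G' : ℝ → Matrix (Fin n) (Fin n) ℂ)
    (hEdiff : ∀ t i j, HasDerivAt (fun s => E s i j) (E' t i j) t)
    (hxdiff : ∀ t i, HasDerivAt (fun s => x s i) (x' t i) t)
    (hydiff : ∀ t i, HasDerivAt (fun s => y s i) (y' t i) t)
    (hlamdiff : ∀ t, HasDerivAt lam (lam' t) t)
    (hGdiff : ∀ t i j, HasDerivAt (fun s => G s i j) (G' t i j) t)
    (heig : ∀ t, (A + (ε : ℂ) • E t) *ᵥ x t = lam t • x t)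
    (hleig : ∀ t, star (y t) ᵥ* (A + (ε : ℂ) • E t) = lam t • star (y t))
    (hxnorm : ∀ t, star (x t) ⬝ᵥ x t = 1)
    (hynorm : ∀ t, star (y t) ⬝ᵥ y t = 1)
    (hyx : ∀ t, star (y t) ⬝ᵥ x t ≠ 0)
    (hG : ∀ t, IsGroupInverse (A + (ε : ℂ) • E t - lam t • 1) (G t))
    (hGx : ∀ t, G t *ᵥ x t = 0)
    (hyG : ∀ t, star (y t) ᵥ* G t = 0)
    (hx' : ∀ t, x' t =
      (star (x t) ⬝ᵥ (G t *ᵥ (((ε : ℂ) • E' t) *ᵥ x t))) • x t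
        - G t *ᵥ (((ε : ℂ) • E' t) *ᵥ x t))
    (hy' : ∀ t, star (y' t) =
      (star (y t) ⬝ᵥ ((((ε : ℂ) • E' t) * G t) *ᵥ y t)) • star (y t)
        - star (y t) ᵥ* (((ε : ℂ) • E' t) * G t))
    (hEnorm : ∀ t, frobNorm (E t) = 1)
    (hODE : ∀ t, E' t = -(Smat (x t) (y t) (G t))
        + (frobInner (E t) (Smat (x t) (y t) (G t))).re • E t) :
    ∀ t, HasDerivAt (fun s => ‖star (y s) ⬝ᵥ x s‖)
        (-(ε * ‖star (y t) ⬝ᵥ x t‖) *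
          frobNorm (Smat (x t) (y t) (G t)
            - (frobInner (E t) (Smat (x t) (y t) (G t))).re • E t) ^ 2) t
      ∧ ((-(ε * ‖star (y t) ⬝ᵥ x t‖) *
          frobNorm (Smat (x t) (y t) (G t)
            - (frobInner (E t) (Smat (x t) (y t) (G t))).re • E t) ^ 2 = 0)
          ↔ E' t = 0) :=
  stmt2_general ε hε E E' x x' y y' G hxdiff hydiff hyx hGx hyG hx' hy' hEnorm hODE
end

section
/- Let M ∈ ℂ^{n×n} have rank n−1, let x, y ∈ ℂ^n be unit vectors with Mx = 0 and y^H M = 0 and y^H x ≠ 0, and let G be a group inverse of M. Set S = y y^H G^H + G^H x x^H. Then: if |y^H x| < 1 the matrix S has rank exactly 2, whereas if |y^H x| = 1 then S = 0 (the zero matrix). -/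
open Matrix

/-! Write `S = y vᴴ + w xᴴ` with `v = G y` and `w = Gᴴ x`. From `G = G² M` and `M = M² G`, a
group inverse satisfies `ker M ⊆ ker G` and `M (G z) = 0 → M z = 0`, and `Gᴴ` is a group inverse
of `Mᴴ`. The kernels of `M` and `Mᴴ` are the lines through `x` and `y`, and by the equality case
of Cauchy–Schwarz `|yᴴ x| = 1` exactly when these lines coincide. If they do, `v = w = 0`. If
not, `Mᴴ` kills `y` but not `w`, and `M` kills `x` but not `v`, so both `(y, w)` and `(v, x)` are
linearly independent and `S` has rank 2. -/

open Module Submodule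

theorem LinearIndependent.pair_of_map_eq_zero {K V W : Type*} [DivisionRing K] [AddCommGroup V]
    [Module K V] [AddCommGroup W] [Module K W] (f : V →ₗ[K] W) {u w : V}
    (hu : u ≠ 0) (hfu : f u = 0) (hfw : f w ≠ 0) : LinearIndependent K ![u, w] := by
  refine LinearIndependent.pair_iff.2 fun s t hst => ?_
  have ht : t = 0 := by simpa [hfu, hfw] using congrArg f hst
  subst ht
  simpa [hu] using hst

namespace Matrix

variable {K l m n : Type*}

theorem rank_mul_eq_right_of_mulVec_injective [CommRing K] [Fintype m] [Fintype n]
    {A : Matrix l m K} (hA : Function.Injective A.mulVec) (B : Matrix m n K) :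
    (A * B).rank = B.rank := by
  rw [Matrix.rank, Matrix.rank, mulVecLin_mul, LinearMap.range_comp,
    ← (Submodule.equivMapOfInjective A.mulVecLin hA _).finrank_eq]

theorem rank_vecMulVec_add_vecMulVec [Field K] [Fintype m] [Fintype n] {a c : m → K}
    {b d : n → K} (hac : LinearIndependent K ![a, c]) (hbd : LinearIndependent K ![b, d]) :
    (vecMulVec a b + vecMulVec c d).rank = 2 := by
  have hfactor : vecMulVec a b + vecMulVec c d = (of ![a, c])ᵀ * of ![b, d] := by
    ext i j
    simp [mul_apply, Fin.sum_univ_two, vecMulVec_apply]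
  have hinj : Function.Injective (of ![a, c])ᵀ.mulVec := by
    rwa [mulVec_injective_iff, col_transpose]
  rw [hfactor, rank_mul_eq_right_of_mulVec_injective hinj]
  exact LinearIndependent.rank_matrix hbd

theorem ker_mulVecLin_eq_span_singleton [Field K] [Fintype n] {M : Matrix m n K}
    (hrank : M.rank = Fintype.card n - 1) {x : n → K} (hx : x ≠ 0) (hMx : M *ᵥ x = 0) :
    LinearMap.ker M.mulVecLin = K ∙ x := by
  have hle : K ∙ x ≤ LinearMap.ker M.mulVecLin := by
    rwa [span_singleton_le_iff_mem, LinearMap.mem_ker]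
  have hdim := LinearMap.finrank_range_add_finrank_ker M.mulVecLin
  have hpos := Submodule.finrank_mono hle
  rw [finrank_span_singleton hx] at hpos
  rw [finrank_fintype_fun_eq_card, ← rank] at hdim
  refine (eq_of_le_of_finrank_le hle ?_).symm
  rw [finrank_span_singleton hx]
  omega

end Matrix

theorem norm_star_dotProduct_eq_one_iff {𝕜 ι : Type*} [RCLike 𝕜] [Fintype ι] {x y : ι → 𝕜}
    (hx : star x ⬝ᵥ x = 1) (hy : star y ⬝ᵥ y = 1) : ‖star x ⬝ᵥ y‖ = 1 ↔ y ∈ 𝕜 ∙ x := by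
  have hnorm : ∀ z : ι → 𝕜, star z ⬝ᵥ z = 1 → ‖WithLp.toLp 2 z‖ = 1 := fun z hz => by
    have := inner_self_eq_norm_sq_to_K (𝕜 := 𝕜) (WithLp.toLp 2 z)
    rw [EuclideanSpace.inner_toLp_toLp, dotProduct_comm, hz] at this
    exact (pow_eq_one_iff_of_nonneg (norm_nonneg _) two_ne_zero).1 (by exact_mod_cast this.symm)
  have hx0 : WithLp.toLp 2 x ≠ 0 := by
    intro h; simpa [h] using hnorm x hx
  have hcs := (norm_inner_eq_norm_tfae 𝕜 (WithLp.toLp 2 x) (WithLp.toLp 2 y)).out 0 3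
  rw [EuclideanSpace.inner_toLp_toLp, dotProduct_comm, hnorm x hx, hnorm y hy, one_mul,
    or_iff_right hx0] at hcs
  rw [hcs, mem_span_singleton, mem_span_singleton]
  simp [← WithLp.toLp_smul]

namespace IsGroupInverse

variable {n : ℕ} {M G : Matrix (Fin n) (Fin n) ℂ}

theorem conjTranspose (hG : IsGroupInverse M G) : IsGroupInverse Mᴴ Gᴴ := by
  obtain ⟨hcomm, hGMG, hMGM⟩ := hG
  refine ⟨?_, ?_, ?_⟩
  · rw [← conjTranspose_mul, ← conjTranspose_mul, hcomm]
  · rw [← conjTranspose_mul, ← conjTranspose_mul, ← Matrix.mul_assoc, hGMG]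
  · rw [← conjTranspose_mul, ← conjTranspose_mul, ← Matrix.mul_assoc, hMGM]

theorem mulVec_eq_zero (hG : IsGroupInverse M G) {z : Fin n → ℂ} (hz : M *ᵥ z = 0) :
    G *ᵥ z = 0 := by
  obtain ⟨hcomm, hGMG, -⟩ := hG
  rw [← hGMG, Matrix.mul_assoc, hcomm, ← mulVec_mulVec, ← mulVec_mulVec, hz, mulVec_zero,
    mulVec_zero]

theorem mulVec_eq_zero_of_mulVec_mulVec_eq_zero (hG : IsGroupInverse M G) {z : Fin n → ℂ}
    (hz : M *ᵥ (G *ᵥ z) = 0) : M *ᵥ z = 0 := by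
  obtain ⟨hcomm, -, hMGM⟩ := hG
  rw [← hMGM, Matrix.mul_assoc, ← hcomm, ← mulVec_mulVec, ← mulVec_mulVec, hz, mulVec_zero]

end IsGroupInverse

theorem Smat_eq {n : ℕ} (x y : Fin n → ℂ) (G : Matrix (Fin n) (Fin n) ℂ) :
    Smat x y G = vecMulVec y (star (G *ᵥ y)) + vecMulVec (Gᴴ *ᵥ x) (star x) := by
  rw [Smat, vecMulVec_mul, mul_vecMulVec, star_mulVec]

theorem stmt3_general {n : ℕ} (M : Matrix (Fin n) (Fin n) ℂ) (hrank : M.rank = n - 1)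
    (x y : Fin n → ℂ)
    (hxnorm : star x ⬝ᵥ x = 1) (hynorm : star y ⬝ᵥ y = 1)
    (hMx : M *ᵥ x = 0) (hyM : star y ᵥ* M = 0)
    (G : Matrix (Fin n) (Fin n) ℂ) (hG : IsGroupInverse M G) :
    (‖star y ⬝ᵥ x‖ < 1 → (Smat x y G).rank = 2) ∧
    (‖star y ⬝ᵥ x‖ = 1 → Smat x y G = 0) := by
  have hMHy : Mᴴ *ᵥ y = 0 := by simpa [star_vecMul] using congrArg star hyM
  have hx0 : x ≠ 0 := by rintro rfl; simp at hxnorm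
  have hy0 : y ≠ 0 := by rintro rfl; simp at hynorm
  have hkerM := ker_mulVecLin_eq_span_singleton (by simpa using hrank) hx0 hMx
  have hrankH : Mᴴ.rank = n - 1 := by open scoped ComplexOrder in rw [rank_conjTranspose, hrank]
  have hkerMH := ker_mulVecLin_eq_span_singleton (by simpa using hrankH) hy0 hMHy
  have hy_mem : y ∈ ℂ ∙ x ↔ ‖star y ⬝ᵥ x‖ = 1 := by
    rw [← norm_star_dotProduct_eq_one_iff hxnorm hynorm, star_dotProduct, norm_star]
  have hx_mem : x ∈ ℂ ∙ y ↔ ‖star y ⬝ᵥ x‖ = 1 :=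
    (norm_star_dotProduct_eq_one_iff hynorm hxnorm).symm
  rw [Smat_eq]
  constructor
  · intro hlt
    have hMy : M *ᵥ y ≠ 0 := fun h => hlt.ne (hy_mem.1 (hkerM ▸ h))
    have hMHx : Mᴴ *ᵥ x ≠ 0 := fun h => hlt.ne (hx_mem.1 (hkerMH ▸ h))
    refine rank_vecMulVec_add_vecMulVec ?_ ?_
    · exact .pair_of_map_eq_zero Mᴴ.mulVecLin hy0 hMHy
        (mt hG.conjTranspose.mulVec_eq_zero_of_mulVec_mulVec_eq_zero hMHx)
    · refine LinearIndependent.pair_symm_iff.1 (.pair_of_map_eq_zero Mᴴ.vecMulLinear ?_ ?_ ?_)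
      · simpa using hx0
      · simp [← star_mulVec, hMx]
      · simpa [← star_mulVec] using mt hG.mulVec_eq_zero_of_mulVec_mulVec_eq_zero hMy
  · intro heq
    have hGy : G *ᵥ y = 0 := hG.mulVec_eq_zero (LinearMap.mem_ker.1 (hkerM ▸ hy_mem.2 heq))
    have hGHx : Gᴴ *ᵥ x = 0 :=
      hG.conjTranspose.mulVec_eq_zero (LinearMap.mem_ker.1 (hkerMH ▸ hx_mem.2 heq))
    simp [hGy, hGHx]

theorem stmt3 {n : ℕ} (M : Matrix (Fin n) (Fin n) ℂ) (hrank : M.rank = n - 1)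
    (x y : Fin n → ℂ)
    (hxnorm : star x ⬝ᵥ x = 1) (hynorm : star y ⬝ᵥ y = 1)
    (hMx : M *ᵥ x = 0) (hyM : star y ᵥ* M = 0)
    (hyx : star y ⬝ᵥ x ≠ 0)
    (G : Matrix (Fin n) (Fin n) ℂ) (hG : IsGroupInverse M G) :
    (‖star y ⬝ᵥ x‖ < 1 → (Smat x y G).rank = 2) ∧
    (‖star y ⬝ᵥ x‖ = 1 → Smat x y G = 0) :=
  stmt3_general M hrank x y hxnorm hynorm hMx hyM G hG
end

section
/- Let B ∈ ℂ^{n×n} have all real entries and let λ ∈ ℂ with Im(λ) ≠ 0 be a simple eigenvalue of B, i.e. rank(B−λI) = n−1 and the unit right and left eigenvectors x, y ∈ ℂ^n (satisfying (B−λI)x = 0 and y^H(B−λI) = 0) have y^H x ≠ 0; normalize so that y^H x is real with 0 < y^H x < 1. Let G be a group inverse of B−λI and set S = y y^H G^H + G^H x x^H. Then the entrywise real part Re(S) is not the zero matrix. -/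
open Matrix

private lemma star_mulVec_map {n : ℕ} (A : Matrix (Fin n) (Fin n) ℂ) (v : Fin n → ℂ) :
    star (A *ᵥ v) = A.map (starRingEnd ℂ) *ᵥ star v := by
  funext i
  simp [Matrix.mulVec, dotProduct, star_sum, Matrix.map_apply, mul_comm]

private lemma star_vecMul_map {n : ℕ} (A : Matrix (Fin n) (Fin n) ℂ) (v : Fin n → ℂ) :
    star (v ᵥ* A) = star v ᵥ* A.map (starRingEnd ℂ) := by
  funext j
  simp [Matrix.vecMul, dotProduct, star_sum, Matrix.map_apply, mul_comm]

private lemma vecMul_vecMulVec {n : ℕ} (v a b : Fin n → ℂ) :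
    v ᵥ* vecMulVec a b = (v ⬝ᵥ a) • b := by
  funext j
  simp only [Matrix.vecMul, dotProduct, Matrix.vecMulVec_apply, Pi.smul_apply,
    smul_eq_mul]
  rw [Finset.sum_mul]
  exact Finset.sum_congr rfl (fun i _ => by ring)

private lemma vecMul_smul_one {n : ℕ} (v : Fin n → ℂ) (c : ℂ) :
    v ᵥ* (c • (1 : Matrix (Fin n) (Fin n) ℂ)) = c • v := by
  rw [show (c • (1 : Matrix (Fin n) (Fin n) ℂ)) = (c • (1 : Matrix (Fin n) (Fin n) ℂ))ᵀ by
    simp, Matrix.vecMul_transpose, Matrix.smul_mulVec, Matrix.one_mulVec]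

theorem stmt10 {n : ℕ} (B : Matrix (Fin n) (Fin n) ℂ)
    (hBreal : ∀ i j, (B i j).im = 0)
    (lam : ℂ) (hlam : lam.im ≠ 0)
    (hrank : (B - lam • 1).rank = n - 1)
    (x y : Fin n → ℂ)
    (hxnorm : star x ⬝ᵥ x = 1) (hynorm : star y ⬝ᵥ y = 1)
    (hx : (B - lam • 1) *ᵥ x = 0)
    (hy : star y ᵥ* (B - lam • 1) = 0)
    (hyx : star y ⬝ᵥ x ≠ 0)
    (hyxim : (star y ⬝ᵥ x).im = 0)
    (hyxpos : 0 < (star y ⬝ᵥ x).re)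
    (hyxlt : (star y ⬝ᵥ x).re < 1)
    (G : Matrix (Fin n) (Fin n) ℂ)
    (hG : IsGroupInverse (B - lam • 1) G) :
    (Smat x y G).map Complex.re ≠ 0 := by
  intro h
  set M : Matrix (Fin n) (Fin n) ℂ := B - lam • 1 with hMdef
  obtain ⟨hc, hgmg, hmgm⟩ := hG
  set s : ℂ := star y ⬝ᵥ x with hsdef
  set μ : ℂ := starRingEnd ℂ lam - lam with hμdef
  -- basic nondegeneracy
  have hn : 0 < n := by
    rcases Nat.eq_zero_or_pos n with h0 | h0
    · exfalso; subst h0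
      simp [dotProduct] at hxnorm
    · exact h0
  have hxne : x ≠ 0 := by
    intro h0; rw [h0] at hxnorm; simp at hxnorm
  have hsyne : star y ≠ 0 := by
    intro h0; rw [h0] at hynorm; simp at hynorm
  have hμne : μ ≠ 0 := by
    intro h0
    have := congrArg Complex.im h0
    simp [hμdef, Complex.sub_im, Complex.conj_im] at this
    exact hlam (by linarith)
  have hμconj : starRingEnd ℂ μ = -μ := by
    simp only [hμdef, map_sub, Complex.conj_conj]; ring
  have hsconj : starRingEnd ℂ s = s := Complex.conj_eq_iff_im.mpr hyxim
  have hsne : s ≠ 0 := hyx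
  have hBconj : ∀ i j, starRingEnd ℂ (B i j) = B i j :=
    fun i j => Complex.conj_eq_iff_im.mpr (hBreal i j)
  -- the conjugate of M
  have hMmap : M.map (starRingEnd ℂ) = M - μ • 1 := by
    ext i j
    by_cases hij : i = j <;>
      simp [Matrix.map_apply, hMdef, Matrix.sub_apply, Matrix.smul_apply, Matrix.one_apply, hij,
        map_sub, hBconj, hμdef]
  have hMxbar : M *ᵥ star x = μ • star x := by
    have h1 : M.map (starRingEnd ℂ) *ᵥ star x = 0 := by
      rw [← star_mulVec_map, hx]; simp
    rw [hMmap, Matrix.sub_mulVec, Matrix.smul_mulVec, Matrix.one_mulVec,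
      sub_eq_zero] at h1
    exact h1
  have hyM : y ᵥ* M = μ • y := by
    have h1 : y ᵥ* M.map (starRingEnd ℂ) = 0 := by
      have h2 := congrArg star hy
      rw [star_vecMul_map] at h2
      simpa using h2
    rw [hMmap, Matrix.vecMul_sub, vecMul_smul_one, sub_eq_zero] at h1
    exact h1
  -- biorthogonality from realness
  have hyx0 : y ⬝ᵥ x = 0 := by
    have h1 : (y ᵥ* M) ⬝ᵥ x = 0 := by
      rw [← Matrix.dotProduct_mulVec, hx, dotProduct_zero]
    rw [hyM, smul_dotProduct, smul_eq_mul, mul_eq_zero] at h1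
    exact h1.resolve_left hμne
  have hyxbar : star y ⬝ᵥ star x = 0 := by
    have h1 : star y ⬝ᵥ star x = star (x ⬝ᵥ y) := by
      simp [dotProduct, star_sum, mul_comm]
    rw [h1, dotProduct_comm, hyx0, star_zero]
  have hsxy : star x ⬝ᵥ y = s := by
    have h1 : star x ⬝ᵥ y = star (star y ⬝ᵥ x) := by
      simp [dotProduct, star_sum, mul_comm]
    rw [h1, ← hsdef, ← starRingEnd_apply, hsconj]
  -- G kills the eigenvectors
  have hGx : G *ᵥ x = 0 := by
    have hGG : G * G * M = G := by
      rw [mul_assoc, ← hc, ← mul_assoc, hgmg]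
    rw [← hGG, ← Matrix.mulVec_mulVec, hx, Matrix.mulVec_zero]
  have hyG : star y ᵥ* G = 0 := by
    have hMGG : M * (G * G) = G := by
      rw [← mul_assoc, hc, hgmg]
    rw [← hMGG, ← Matrix.vecMul_vecMul, hy, Matrix.zero_vecMul]
  -- kernel of M is spanned by x
  have hker : ∀ v : Fin n → ℂ, M *ᵥ v = 0 → ∃ c : ℂ, v = c • x := by
    have hsum := LinearMap.finrank_range_add_finrank_ker M.mulVecLin
    rw [Module.finrank_fintype_fun_eq_card, Fintype.card_fin] at hsum
    have hrange : Module.finrank ℂ (LinearMap.range M.mulVecLin) = n - 1 := hrank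
    have hkdim : Module.finrank ℂ (LinearMap.ker M.mulVecLin) = 1 := by omega
    have hxmem : x ∈ LinearMap.ker M.mulVecLin := by
      rw [LinearMap.mem_ker, Matrix.mulVecLin_apply, hx]
    have hxk : (⟨x, hxmem⟩ : LinearMap.ker M.mulVecLin) ≠ 0 := by
      intro h0
      exact hxne (congrArg Subtype.val h0)
    have hall := (finrank_eq_one_iff_of_nonzero' _ hxk).mp hkdim
    intro v hv
    have hvmem : v ∈ LinearMap.ker M.mulVecLin := by
      rw [LinearMap.mem_ker, Matrix.mulVecLin_apply, hv]
    obtain ⟨c, hcv⟩ := hall ⟨v, hvmem⟩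
    exact ⟨c, (congrArg Subtype.val hcv).symm⟩
  -- kernel of Mᵀ is spanned by star y
  have hkerT : ∀ v : Fin n → ℂ, v ᵥ* M = 0 → ∃ d : ℂ, v = d • star y := by
    have hsum := LinearMap.finrank_range_add_finrank_ker Mᵀ.mulVecLin
    rw [Module.finrank_fintype_fun_eq_card, Fintype.card_fin] at hsum
    have hrange : Module.finrank ℂ (LinearMap.range Mᵀ.mulVecLin) = n - 1 := by
      have h1 : Mᵀ.rank = n - 1 := by rw [Matrix.rank_transpose]; exact hrank
      exact h1
    have hkdim : Module.finrank ℂ (LinearMap.ker Mᵀ.mulVecLin) = 1 := by omega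
    have hymem : star y ∈ LinearMap.ker Mᵀ.mulVecLin := by
      rw [LinearMap.mem_ker, Matrix.mulVecLin_apply, Matrix.mulVec_transpose, hy]
    have hyk : (⟨star y, hymem⟩ : LinearMap.ker Mᵀ.mulVecLin) ≠ 0 := by
      intro h0
      exact hsyne (congrArg Subtype.val h0)
    have hall := (finrank_eq_one_iff_of_nonzero' _ hyk).mp hkdim
    intro v hv
    have hvmem : v ∈ LinearMap.ker Mᵀ.mulVecLin := by
      rw [LinearMap.mem_ker, Matrix.mulVecLin_apply, Matrix.mulVec_transpose, hv]
    obtain ⟨d, hdv⟩ := hall ⟨v, hvmem⟩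
    exact ⟨d, (congrArg Subtype.val hdv).symm⟩
  -- the spectral projector
  set Q : Matrix (Fin n) (Fin n) ℂ := 1 - G * M with hQdef
  have hMQ : M * Q = 0 := by
    rw [hQdef, Matrix.mul_sub, mul_one, ← mul_assoc, hmgm, sub_self]
  have hQM : Q * M = 0 := by
    rw [hQdef, Matrix.sub_mul, one_mul, ← hc, hmgm, sub_self]
  have hcol : ∀ j, ∃ c : ℂ, (fun i => Q i j) = c • x := by
    intro j
    apply hker
    have h1 : M *ᵥ (fun k => Q k j) = fun i => (M * Q) i j := by
      funext i
      simp [Matrix.mulVec, dotProduct, Matrix.mul_apply]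
    rw [h1, hMQ]
    funext i
    simp
  have hrowl : ∀ i, ∃ d : ℂ, (fun j => Q i j) = d • star y := by
    intro i
    apply hkerT
    have h1 : (fun k => Q i k) ᵥ* M = fun j => (Q * M) i j := by
      funext j
      simp [Matrix.vecMul, dotProduct, Matrix.mul_apply]
    rw [h1, hQM]
    funext j
    simp
  have hQne : Q ≠ 0 := by
    intro h0
    have h1 : (1 : Matrix (Fin n) (Fin n) ℂ) - G * M = 0 := by rw [← hQdef, h0]
    have hGM1 : G * M = 1 := (sub_eq_zero.mp h1).symm
    have hMG1 : M * G = 1 := by rw [hc, hGM1]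
    have hu : IsUnit M := ⟨⟨M, G, hMG1, hGM1⟩, rfl⟩
    have hr := Matrix.rank_of_isUnit M hu
    rw [Fintype.card_fin] at hr
    rw [hr] at hrank
    omega
  obtain ⟨i0, j0, hQ00⟩ : ∃ i j, Q i j ≠ 0 := by
    by_contra h0
    push_neg at h0
    exact hQne (by ext i j; exact h0 i j)
  obtain ⟨c0, hc0⟩ := hcol j0
  obtain ⟨d0, hd0⟩ := hrowl i0
  set t : ℂ := d0 * c0 / Q i0 j0 with htdef
  have hQform : ∀ i j, Q i j = t * x i * (star y) j := by
    intro i j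
    obtain ⟨cj, hcj⟩ := hcol j
    have e1 : Q i j = cj * x i := by
      have := congrFun hcj i; simpa using this
    have e2 : Q i0 j = cj * x i0 := by
      have := congrFun hcj i0; simpa using this
    have e3 : Q i j0 = c0 * x i := by
      have := congrFun hc0 i; simpa using this
    have e4 : Q i0 j0 = c0 * x i0 := by
      have := congrFun hc0 i0; simpa using this
    have e5 : Q i0 j = d0 * (star y) j := by
      have := congrFun hd0 j; simpa using this
    have cross : Q i j * Q i0 j0 = Q i0 j * Q i j0 := by
      rw [e1, e2, e3, e4]; ring
    rw [e5, e3] at cross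
    rw [htdef]
    field_simp
    rw [cross]
    simp only [Pi.star_apply, starRingEnd_apply]
    ring
  have hQv : ∀ v : Fin n → ℂ, Q *ᵥ v = (t * (star y ⬝ᵥ v)) • x := by
    intro v
    funext i
    simp only [Matrix.mulVec, dotProduct, Pi.smul_apply, smul_eq_mul]
    calc ∑ j, Q i j * v j = ∑ j, t * x i * (star y) j * v j :=
          Finset.sum_congr rfl (fun j _ => by rw [hQform])
      _ = t * (∑ j, (star y) j * v j) * x i := by
          rw [Finset.mul_sum, Finset.sum_mul]
          exact Finset.sum_congr rfl (fun j _ => by ring)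
  have hQx : Q *ᵥ x = x := by
    rw [hQdef, Matrix.sub_mulVec, Matrix.one_mulVec, ← Matrix.mulVec_mulVec, hx,
      Matrix.mulVec_zero, sub_zero]
  have hxi0 : x i0 ≠ 0 := by
    intro h0
    exact hQ00 (by rw [hQform i0 j0, h0]; ring)
  have hts : t * s = 1 := by
    have h1 := congrFun (hQv x) i0
    rw [hQx] at h1
    have h2 : (t * s) * x i0 = 1 * x i0 := by
      rw [one_mul]
      simpa [hsdef, mul_comm, mul_assoc, mul_left_comm] using h1.symm
    exact mul_right_cancel₀ hxi0 h2
  -- mulVec identities with G * M = 1 - Q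
  have hGMv : ∀ v : Fin n → ℂ, (G * M) *ᵥ v = v - (t * (star y ⬝ᵥ v)) • x := by
    intro v
    have h1 : G * M = 1 - Q := by rw [hQdef, sub_sub_cancel]
    rw [h1, Matrix.sub_mulVec, Matrix.one_mulVec, hQv]
  have hGxbar : G *ᵥ star x = μ⁻¹ • star x := by
    have h1 : (G * M) *ᵥ star x = star x := by
      rw [hGMv, hyxbar, mul_zero, zero_smul, sub_zero]
    have h2 : μ • (G *ᵥ star x) = star x := by
      rw [← Matrix.mulVec_smul, ← hMxbar, Matrix.mulVec_mulVec, h1]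
    have h3 : G *ᵥ star x = μ⁻¹ • (μ • (G *ᵥ star x)) := by
      rw [smul_smul, inv_mul_cancel₀ hμne, one_smul]
    rw [h2] at h3
    exact h3
  -- now exploit Re S = 0
  have hre : ∀ i j, (Smat x y G i j).re = 0 := by
    intro i j
    have h1 := congrFun (congrFun h i) j
    simpa [Matrix.map_apply] using h1
  have hSconj : ∀ i j, star (Smat x y G i j) = - Smat x y G i j := by
    intro i j
    apply Complex.ext <;> simp [hre i j]
  set S : Matrix (Fin n) (Fin n) ℂ := Smat x y G with hSdef
  set q : ℂ := x ⬝ᵥ x with hqdef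
  -- two row computations
  have hxGH0 : star x ᵥ* Gᴴ = 0 := by
    rw [← Matrix.star_mulVec, hGx, star_zero]
  have hE2 : star x ᵥ* S = s • star (G *ᵥ y) := by
    rw [hSdef, Smat, Matrix.vecMul_add, ← Matrix.vecMul_vecMul, ← Matrix.vecMul_vecMul,
      vecMul_vecMulVec, hsxy, hxGH0, Matrix.zero_vecMul, add_zero, Matrix.smul_vecMul,
      ← Matrix.star_mulVec]
  have hstarμinv : star (μ⁻¹) = -μ⁻¹ := by
    rw [← starRingEnd_apply, map_inv₀, hμconj, inv_neg]
  have hxGH : x ᵥ* Gᴴ = (-μ⁻¹) • x := by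
    have h1 : star (G *ᵥ star x) = x ᵥ* Gᴴ := by
      rw [Matrix.star_mulVec, star_star]
    rw [← h1, hGxbar, star_smul, star_star, hstarμinv]
  have hE1 : x ᵥ* S = (-μ⁻¹ * q) • star x := by
    rw [hSdef, Smat, Matrix.vecMul_add, ← Matrix.vecMul_vecMul, ← Matrix.vecMul_vecMul,
      vecMul_vecMulVec, dotProduct_comm, hyx0, zero_smul, Matrix.zero_vecMul,
      zero_add, hxGH, Matrix.smul_vecMul, vecMul_vecMulVec, ← hqdef,
      smul_smul]
  have hrowconj : star (x ᵥ* S) = -(star x ᵥ* S) := by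
    funext j
    simp only [Pi.neg_apply, Pi.star_apply, Matrix.vecMul, dotProduct]
    rw [star_sum, ← Finset.sum_neg_distrib]
    refine Finset.sum_congr rfl fun i _ => ?_
    rw [star_mul', hSconj]
    ring
  have hGyeq : (-s) • (G *ᵥ y) = (-μ⁻¹ * q) • star x := by
    have h1 : star ((-μ⁻¹ * q) • star x) = -(s • star (G *ᵥ y)) := by
      rw [← hE1, hrowconj, hE2]
    have h2 : (-μ⁻¹ * q) • star x = star (-(s • star (G *ᵥ y))) := by
      rw [← h1, star_star]
    have h3 : star (-(s • star (G *ᵥ y))) = (-s) • (G *ᵥ y) := by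
      rw [star_neg, star_smul, star_star, ← starRingEnd_apply, hsconj, ← neg_smul]
    exact (h2.trans h3).symm
  have hGy : G *ᵥ y = ((s⁻¹ * μ⁻¹) * q) • star x := by
    have hns : (-s) ≠ 0 := neg_ne_zero.mpr hsne
    have h1 : G *ᵥ y = (-s)⁻¹ • ((-s) • (G *ᵥ y)) := by
      rw [smul_smul, inv_mul_cancel₀ hns, one_smul]
    rw [hGyeq, smul_smul] at h1
    rw [h1]
    congr 1
    rw [inv_neg]
    field_simp
  have hMGy : (G * M) *ᵥ y = y - t • x := by
    rw [hGMv y, hynorm, mul_one]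
  have hfin : y - t • x = (s⁻¹ * q) • star x := by
    have h1 : M *ᵥ (G *ᵥ y) = (G * M) *ᵥ y := by
      rw [Matrix.mulVec_mulVec, hc]
    rw [hMGy, hGy, Matrix.mulVec_smul, hMxbar, smul_smul] at h1
    rw [← h1]
    congr 1
    field_simp
  have hq2 : star x ⬝ᵥ star x = star q := by
    simp [hqdef, dotProduct, star_sum, mul_comm]
  have hdot : s - t = s⁻¹ * q * star q := by
    have h1 := congrArg (fun v => star x ⬝ᵥ v) hfin
    simp only [dotProduct_sub, dotProduct_smul, smul_eq_mul] at h1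
    rw [hsxy, hxnorm, mul_one, hq2] at h1
    linear_combination h1
  have key : s * s - 1 = q * star q := by
    have h2 : s * (s - t) = s * (s⁻¹ * q * star q) := by rw [hdot]
    rw [mul_sub, show s * t = 1 from by rw [mul_comm]; exact hts] at h2
    rw [← mul_assoc, ← mul_assoc, mul_inv_cancel₀ hsne, one_mul] at h2
    exact h2
  have hqnorm : q * star q = (Complex.normSq q : ℂ) := by
    rw [← starRingEnd_apply, Complex.mul_conj]
  rw [hqnorm] at key
  have hre2 := congrArg Complex.re key
  have hsre : s = (s.re : ℂ) := Complex.ext rfl (by simp [hyxim])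
  rw [hsre] at hre2
  simp only [Complex.sub_re, Complex.mul_re, Complex.ofReal_re, Complex.ofReal_im,
    Complex.one_re, Complex.ofReal_im, mul_zero, sub_zero, Complex.normSq_nonneg] at hre2
  have hnq := Complex.normSq_nonneg q
  nlinarith [hyxpos, hyxlt, hnq, hre2]
end

section
/- Let ε* > ε₀ > 0 and suppose that on [ε₀, ε*) we are given continuous functions x(ε), y(ε) ∈ ℂ^n with ‖x(ε)‖₂ = ‖y(ε)‖₂ = 1 and r(ε) := y(ε)^H x(ε) real and positive, and a continuous B(ε) ∈ ℂ^{n×n} with x(ε)^H B(ε) = 0 and B(ε)y(ε) = 0. Define Π(ε) = I − x(ε)y(ε)^H/r(ε), G(ε) = Π(ε)B(ε)Π(ε), and S(ε) = y y^H G^H + G^H x x^H. Assume that as ε ↗ ε* one has r(ε) → 0, x(ε) → x_*, y(ε) → y_*, and B(ε) → B_*, set C_* = y_*^H B_* x_*, and assume further that r is differentiable with r'(ε) = −r(ε)‖S(ε)‖_F for all ε ∈ [ε₀, ε*). Then lim_{ε ↗ ε*} r(ε) r'(ε) = −2|C_*|. -/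
/-!
Since `Π = I - x yᴴ / r`, the matrix `r² G = (r I - x yᴴ) B (r I - x yᴴ)` is polynomial in `r`, and
`S` is conjugate-linear in `G`, so `r r' = -r² ‖S‖_F = -‖S(x, y, r² G)‖_F` is a continuous function
of `(x, y, r, B)` up to `r = 0`. In the limit `r² G` becomes `x* y*ᴴ B* x* y*ᴴ = C* x* y*ᴴ`, and
for unit vectors `S(x, y, x yᴴ) = 2 y xᴴ`, whose Frobenius norm is `2`; hence `r r' → -2 |C*|`.
-/

open Matrix Filter

/-- `G(ε) = Π(ε) B(ε) Π(ε)` where `Π = I − x yᴴ/r`. -/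
noncomputable def Gof {n : ℕ} (x y : Fin n → ℂ) (r : ℝ) (B : Matrix (Fin n) (Fin n) ℂ) :
    Matrix (Fin n) (Fin n) ℂ :=
  ((1 : Matrix (Fin n) (Fin n) ℂ) - ((r : ℂ))⁻¹ • vecMulVec x (star y)) * B *
    ((1 : Matrix (Fin n) (Fin n) ℂ) - ((r : ℂ))⁻¹ • vecMulVec x (star y))

open Topology

variable {n : ℕ}

lemma isClosed_star_dotProduct_self_eq_one {ι : Type*} [Fintype ι] :
    IsClosed {v : ι → ℂ | star v ⬝ᵥ v = 1} :=
  isClosed_eq (by fun_prop) continuous_const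

lemma continuous_frobNorm : Continuous (frobNorm : Matrix (Fin n) (Fin n) ℂ → ℝ) := by
  unfold frobNorm frobInner
  fun_prop

lemma frobNorm_smul (c : ℂ) (A : Matrix (Fin n) (Fin n) ℂ) :
    frobNorm (c • A) = ‖c‖ * frobNorm A := by
  have : frobInner (c • A) (c • A) = (Complex.normSq c : ℂ) * frobInner A A := by
    simp only [frobInner, conjTranspose_smul, smul_mul_smul_comm, trace_smul, smul_eq_mul,
      Complex.star_def, Complex.normSq_eq_conj_mul_self]
  rw [frobNorm, frobNorm, this, Complex.re_ofReal_mul,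
    Real.sqrt_mul (Complex.normSq_nonneg c), Complex.norm_def]

lemma frobNorm_vecMulVec_star {a b : Fin n → ℂ} (ha : star a ⬝ᵥ a = 1) (hb : star b ⬝ᵥ b = 1) :
    frobNorm (vecMulVec a (star b)) = 1 := by
  simp [frobNorm, frobInner, vecMulVec_mul_vecMulVec, ha, dotProduct_comm b (star b), hb]

lemma Smat_smul (x y : Fin n → ℂ) (t : ℂ) (G : Matrix (Fin n) (Fin n) ℂ) :
    Smat x y (t • G) = star t • Smat x y G := by
  simp only [Smat, conjTranspose_smul, mul_smul_comm, smul_mul_assoc, smul_add]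

lemma Smat_vecMulVec {x y : Fin n → ℂ} (hx : star x ⬝ᵥ x = 1) (hy : star y ⬝ᵥ y = 1) :
    Smat x y (vecMulVec x (star y)) = (2 : ℂ) • vecMulVec y (star x) := by
  simp only [Smat, conjTranspose_vecMulVec, star_star, vecMulVec_mul_vecMulVec, hx, hy, one_smul]
  module

/-- `r² • Gof x y r B` as a polynomial in `r`; unlike `Gof`, which degenerates to `B` at `r = 0`
because `0⁻¹ = 0`, it is continuous there. -/
noncomputable def scaledGof (x y : Fin n → ℂ) (t : ℂ) (B : Matrix (Fin n) (Fin n) ℂ) :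
    Matrix (Fin n) (Fin n) ℂ :=
  (t • 1 - vecMulVec x (star y)) * B * (t • 1 - vecMulVec x (star y))

lemma sq_smul_Gof (x y : Fin n → ℂ) {r : ℝ} (hr : r ≠ 0) (B : Matrix (Fin n) (Fin n) ℂ) :
    ((r : ℂ) ^ 2) • Gof x y r B = scaledGof x y r B := by
  have hscale : (r : ℂ) • (1 - (r : ℂ)⁻¹ • vecMulVec x (star y)) =
      (r : ℂ) • 1 - vecMulVec x (star y) := by
    rw [smul_sub, smul_smul, mul_inv_cancel₀ (Complex.ofReal_ne_zero.2 hr), one_smul]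
  rw [scaledGof, ← hscale, Gof, smul_mul_assoc, mul_smul_comm, smul_mul_assoc, smul_smul, ← sq]

lemma scaledGof_zero (x y : Fin n → ℂ) (B : Matrix (Fin n) (Fin n) ℂ) :
    scaledGof x y 0 B = (star y ⬝ᵥ (B *ᵥ x)) • vecMulVec x (star y) := by
  rw [scaledGof, zero_smul, zero_sub, neg_mul, neg_mul_neg, vecMulVec_mul,
    vecMulVec_mul_vecMulVec, vecMulVec_smul, dotProduct_mulVec]

lemma continuous_frobNorm_Smat_scaledGof :
    Continuous fun p : (Fin n → ℂ) × (Fin n → ℂ) × ℂ × Matrix (Fin n) (Fin n) ℂ =>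
      frobNorm (Smat p.1 p.2.1 (scaledGof p.1 p.2.1 p.2.2.1 p.2.2.2)) := by
  refine continuous_frobNorm.comp ?_
  unfold Smat scaledGof
  fun_prop

lemma sq_mul_frobNorm_Smat_Gof (x y : Fin n → ℂ) {r : ℝ} (hr : r ≠ 0)
    (B : Matrix (Fin n) (Fin n) ℂ) :
    r ^ 2 * frobNorm (Smat x y (Gof x y r B)) = frobNorm (Smat x y (scaledGof x y r B)) := by
  rw [← sq_smul_Gof x y hr, Smat_smul, frobNorm_smul, norm_star, norm_pow, Complex.norm_real,
    Real.norm_eq_abs, sq_abs]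

lemma frobNorm_Smat_scaledGof_zero {x y : Fin n → ℂ} (hx : star x ⬝ᵥ x = 1)
    (hy : star y ⬝ᵥ y = 1) (B : Matrix (Fin n) (Fin n) ℂ) :
    frobNorm (Smat x y (scaledGof x y 0 B)) = 2 * ‖star y ⬝ᵥ (B *ᵥ x)‖ := by
  rw [scaledGof_zero, Smat_smul, Smat_vecMulVec hx hy, smul_smul, frobNorm_smul,
    frobNorm_vecMulVec_star hy hx, norm_mul, norm_star, Complex.norm_two]
  ring

theorem stmt17_general {n : ℕ} (ε₀ εs : ℝ) (hεs : ε₀ < εs)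
    (x y : ℝ → (Fin n → ℂ)) (B : ℝ → Matrix (Fin n) (Fin n) ℂ)
    (xs ys : Fin n → ℂ) (Bs : Matrix (Fin n) (Fin n) ℂ)
    (r r' : ℝ → ℝ)
    (hr : ∀ e ∈ Set.Ico ε₀ εs, star (y e) ⬝ᵥ x e = (r e : ℂ) ∧ 0 < r e)
    (hxnorm : ∀ e ∈ Set.Ico ε₀ εs, star (x e) ⬝ᵥ x e = 1)
    (hynorm : ∀ e ∈ Set.Ico ε₀ εs, star (y e) ⬝ᵥ y e = 1)
    (hrlim : Tendsto r (nhdsWithin εs (Set.Ico ε₀ εs)) (nhds 0))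
    (hxlim : ∀ i, Tendsto (fun e => x e i) (nhdsWithin εs (Set.Ico ε₀ εs)) (nhds (xs i)))
    (hylim : ∀ i, Tendsto (fun e => y e i) (nhdsWithin εs (Set.Ico ε₀ εs)) (nhds (ys i)))
    (hBlim : ∀ i j, Tendsto (fun e => B e i j) (nhdsWithin εs (Set.Ico ε₀ εs)) (nhds (Bs i j)))
    (hr' : ∀ e ∈ Set.Ico ε₀ εs,
      r' e = -(r e) * frobNorm (Smat (x e) (y e) (Gof (x e) (y e) (r e) (B e)))) :
    Tendsto (fun e => r e * r' e) (nhdsWithin εs (Set.Ico ε₀ εs))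
      (nhds (-2 * ‖star ys ⬝ᵥ (Bs *ᵥ xs)‖)) := by
  have := right_nhdsWithin_Ico_neBot hεs
  have hmem : ∀ᶠ e in 𝓝[Set.Ico ε₀ εs] εs, e ∈ Set.Ico ε₀ εs := self_mem_nhdsWithin
  have hx : Tendsto x (𝓝[Set.Ico ε₀ εs] εs) (𝓝 xs) := tendsto_pi_nhds.2 hxlim
  have hy : Tendsto y (𝓝[Set.Ico ε₀ εs] εs) (𝓝 ys) := tendsto_pi_nhds.2 hylim
  have hB : Tendsto B (𝓝[Set.Ico ε₀ εs] εs) (𝓝 Bs) :=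
    tendsto_pi_nhds.2 fun i => tendsto_pi_nhds.2 (hBlim i)
  have hrC : Tendsto (fun e => (r e : ℂ)) (𝓝[Set.Ico ε₀ εs] εs) (𝓝 0) :=
    (Complex.continuous_ofReal.tendsto' 0 0 Complex.ofReal_zero).comp hrlim
  have hxs := isClosed_star_dotProduct_self_eq_one.mem_of_tendsto hx (hmem.mono hxnorm)
  have hys := isClosed_star_dotProduct_self_eq_one.mem_of_tendsto hy (hmem.mono hynorm)
  have hS := (continuous_frobNorm_Smat_scaledGof.tendsto _).comp
    (hx.prodMk_nhds (hy.prodMk_nhds (hrC.prodMk_nhds hB)))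
  rw [Function.comp_def, frobNorm_Smat_scaledGof_zero hxs hys] at hS
  rw [neg_mul]
  refine hS.neg.congr' ?_
  filter_upwards [hmem] with e he
  rw [hr' e he, ← sq_mul_frobNorm_Smat_Gof _ _ (hr e he).2.ne']
  ring

theorem stmt17 {n : ℕ} (ε₀ εs : ℝ) (hε₀ : 0 < ε₀) (hεs : ε₀ < εs)
    (x y : ℝ → (Fin n → ℂ)) (B : ℝ → Matrix (Fin n) (Fin n) ℂ)
    (xs ys : Fin n → ℂ) (Bs : Matrix (Fin n) (Fin n) ℂ)
    (r r' : ℝ → ℝ)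
    (hr : ∀ e ∈ Set.Ico ε₀ εs, star (y e) ⬝ᵥ x e = (r e : ℂ) ∧ 0 < r e)
    (hxnorm : ∀ e ∈ Set.Ico ε₀ εs, star (x e) ⬝ᵥ x e = 1)
    (hynorm : ∀ e ∈ Set.Ico ε₀ εs, star (y e) ⬝ᵥ y e = 1)
    (hxB : ∀ e ∈ Set.Ico ε₀ εs, star (x e) ᵥ* B e = 0)
    (hBy : ∀ e ∈ Set.Ico ε₀ εs, B e *ᵥ y e = 0)
    (hxcont : ∀ i, ContinuousOn (fun e => x e i) (Set.Ico ε₀ εs))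
    (hycont : ∀ i, ContinuousOn (fun e => y e i) (Set.Ico ε₀ εs))
    (hBcont : ∀ i j, ContinuousOn (fun e => B e i j) (Set.Ico ε₀ εs))
    (hrlim : Tendsto r (nhdsWithin εs (Set.Ico ε₀ εs)) (nhds 0))
    (hxlim : ∀ i, Tendsto (fun e => x e i) (nhdsWithin εs (Set.Ico ε₀ εs)) (nhds (xs i)))
    (hylim : ∀ i, Tendsto (fun e => y e i) (nhdsWithin εs (Set.Ico ε₀ εs)) (nhds (ys i)))
    (hBlim : ∀ i j, Tendsto (fun e => B e i j) (nhdsWithin εs (Set.Ico ε₀ εs)) (nhds (Bs i j)))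
    (hrdiff : ∀ e ∈ Set.Ico ε₀ εs, HasDerivAt r (r' e) e)
    (hr' : ∀ e ∈ Set.Ico ε₀ εs,
      r' e = -(r e) * frobNorm (Smat (x e) (y e) (Gof (x e) (y e) (r e) (B e)))) :
    Tendsto (fun e => r e * r' e) (nhdsWithin εs (Set.Ico ε₀ εs))
      (nhds (-2 * ‖star ys ⬝ᵥ (Bs *ᵥ xs)‖)) :=
  stmt17_general ε₀ εs hεs x y B xs ys Bs r r' hr hxnorm hynorm hrlim hxlim hylim hBlim hr'
end
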